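/- arXiv:1811.00679 — 5 statements merged into one kernel-verified Lean document; each statement's English description precedes it below -/
import Mathlib

section
/- For every natural number n ≥ 3, the subfield of ℂ generated over ℚ by i·cos(π/n) has degree over ℚ equal to Euler's totient φ(n). -/
/-!
Let `c = cos (2π/n)`, `ζ = exp (2πi/n)` and `α = i cos (π/n)`. Over the real field
`E = ℚ(c)`, `ζ` is a root of `X² - 2cX + 1` and `α` a root of `X² + (1 + c)/2`; both are
non-real when `n ≥ 3`, so `ℚ(ζ)` and `ℚ(α)` are quadratic extensions of `E` (note
`c = -1 - 2α²`). By the tower law `[ℚ(α) : ℚ] = [ℚ(ζ) : ℚ] = φ(n)`, the cyclotomic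
polynomial being irreducible over `ℚ`.
-/

open Polynomial IntermediateField

namespace IntermediateField

variable {F L : Type*} [Field F] [Field L] [Algebra F L]

theorem finrank_adjoin_simple_eq_two_of_quadratic {x : L} (b c : F)
    (hx : x ^ 2 + algebraMap F L b * x + algebraMap F L c = 0)
    (hxF : x ∉ (⊥ : IntermediateField F L)) :
    Module.finrank F F⟮x⟯ = 2 := by
  set q : F[X] := C 1 * X ^ 2 + C b * X + C c
  have hq : q.Monic := leadingCoeff_quadratic one_ne_zero
  have hqx : aeval x q = 0 := by simpa [q, Algebra.smul_def] using hx
  have hint : IsIntegral F x := ⟨q, hq, hqx⟩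
  rw [adjoin.finrank hint]
  have hle : (minpoly F x).natDegree ≤ 2 :=
    natDegree_quadratic (b := b) (c := c) one_ne_zero ▸
      natDegree_le_of_dvd (minpoly.dvd F x hqx) hq.ne_zero
  have hne : (minpoly F x).natDegree ≠ 1 := fun h =>
    hxF (mem_bot.mpr (minpoly.natDegree_eq_one_iff.mp h))
  have := minpoly.natDegree_pos hint
  omega

theorem relfinrank_adjoin_simple_eq_two_of_quadratic {E : IntermediateField F L} {x b c : L}
    (hE : E ≤ F⟮x⟯) (hb : b ∈ E) (hc : c ∈ E) (hx : x ^ 2 + b * x + c = 0)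
    (hxE : x ∉ E) :
    relfinrank E F⟮x⟯ = 2 := by
  rw [relfinrank_eq_finrank_of_le hE, extendScalars_adjoin hE]
  refine finrank_adjoin_simple_eq_two_of_quadratic ⟨b, hb⟩ ⟨c, hc⟩ hx fun h => hxE ?_
  obtain ⟨y, rfl⟩ := mem_bot.mp h
  exact y.2

theorem finrank_eq_of_relfinrank_eq {E A B : IntermediateField F L} (hA : E ≤ A) (hB : E ≤ B)
    (h : relfinrank E A = relfinrank E B) : Module.finrank F A = Module.finrank F B := by
  rw [← finrank_bot_mul_relfinrank hA, ← finrank_bot_mul_relfinrank hB, h]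

end IntermediateField

theorem IsPrimitiveRoot.finrank_adjoin_rat {K : Type*} [Field K] [CharZero K] {ζ : K} {n : ℕ}
    (hζ : IsPrimitiveRoot ζ n) (hn : n ≠ 0) : Module.finrank ℚ ℚ⟮ζ⟯ = n.totient := by
  rw [adjoin.finrank (hζ.isIntegral (Nat.pos_of_ne_zero hn)).tower_top,
    ← cyclotomic_eq_minpoly_rat hζ (Nat.pos_of_ne_zero hn), natDegree_cyclotomic]

namespace Complex

theorem im_eq_zero_of_mem_adjoin_ofReal {r : ℝ} {z : ℂ} (hz : z ∈ ℚ⟮(r : ℂ)⟯) :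
    z.im = 0 := by
  have : ℚ⟮(r : ℂ)⟯ ≤ (ofRealAm.restrictScalars ℚ).fieldRange :=
    adjoin_simple_le_iff.mpr ⟨r, rfl⟩
  obtain ⟨s, rfl⟩ := this hz
  simp

theorem exp_mul_I_sq_sub_two_cos_mul_add_one (x : ℂ) :
    exp (x * I) ^ 2 - 2 * cos x * exp (x * I) + 1 = 0 := by
  rw [two_cos, ← exp_nat_mul, add_mul, ← exp_add, ← exp_add]
  ring_nf
  simp

theorem I_mul_cos_sq_add_one_add_cos_two_mul_div_two (x : ℂ) :
    (I * cos x) ^ 2 + (1 + cos (2 * x)) / 2 = 0 := by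
  rw [mul_pow, I_sq, cos_sq]
  ring

theorem adjoin_cos_le_adjoin_exp_mul_I (t : ℝ) :
    ℚ⟮(Real.cos t : ℂ)⟯ ≤ ℚ⟮exp (t * I)⟯ := by
  refine adjoin_simple_le_iff.mpr ?_
  have hζ : exp (t * I) ∈ ℚ⟮exp (t * I)⟯ := mem_adjoin_simple_self ℚ _
  have hroot := exp_mul_I_sq_sub_two_cos_mul_add_one t
  rw [ofReal_cos, show cos t = (exp (t * I) + (exp (t * I))⁻¹) / 2 by
    field_simp [exp_ne_zero]; linear_combination -hroot]
  exact div_mem (add_mem hζ (inv_mem hζ)) (ofNat_mem _ 2)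

theorem adjoin_cos_two_mul_le_adjoin_I_mul_cos (x : ℝ) :
    ℚ⟮(Real.cos (2 * x) : ℂ)⟯ ≤ ℚ⟮I * Real.cos x⟯ := by
  refine adjoin_simple_le_iff.mpr ?_
  have hα : I * (Real.cos x : ℂ) ∈ ℚ⟮I * Real.cos x⟯ := mem_adjoin_simple_self ℚ _
  have hroot := I_mul_cos_sq_add_one_add_cos_two_mul_div_two x
  rw [show (Real.cos (2 * x) : ℂ) = -(2 * (I * Real.cos x) ^ 2 + 1) by
    push_cast; linear_combination 2 * hroot]
  exact neg_mem (add_mem (mul_mem (ofNat_mem _ 2) (pow_mem hα 2)) (one_mem _))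

theorem relfinrank_adjoin_cos_adjoin_exp_mul_I {t : ℝ} (ht : Real.sin t ≠ 0) :
    relfinrank ℚ⟮(Real.cos t : ℂ)⟯ ℚ⟮exp (t * I)⟯ = 2 := by
  have hc : (Real.cos t : ℂ) ∈ ℚ⟮(Real.cos t : ℂ)⟯ := mem_adjoin_simple_self ℚ _
  refine relfinrank_adjoin_simple_eq_two_of_quadratic (adjoin_cos_le_adjoin_exp_mul_I t)
    (mul_mem (neg_mem (ofNat_mem _ 2)) hc) (one_mem _) ?_ fun h => ht ?_
  · push_cast
    linear_combination exp_mul_I_sq_sub_two_cos_mul_add_one t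
  · simpa [exp_ofReal_mul_I_im] using im_eq_zero_of_mem_adjoin_ofReal h

theorem relfinrank_adjoin_cos_two_mul_adjoin_I_mul_cos {x : ℝ} (hx : Real.cos x ≠ 0) :
    relfinrank ℚ⟮(Real.cos (2 * x) : ℂ)⟯ ℚ⟮I * Real.cos x⟯ = 2 := by
  have hc : (Real.cos (2 * x) : ℂ) ∈ ℚ⟮(Real.cos (2 * x) : ℂ)⟯ :=
    mem_adjoin_simple_self ℚ _
  refine relfinrank_adjoin_simple_eq_two_of_quadratic (adjoin_cos_two_mul_le_adjoin_I_mul_cos x)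
    (zero_mem _) (div_mem (add_mem (one_mem _) hc) (ofNat_mem _ 2)) ?_ fun h => hx ?_
  · push_cast
    linear_combination I_mul_cos_sq_add_one_add_cos_two_mul_div_two x
  · simpa only [I_mul_im, ofReal_re] using im_eq_zero_of_mem_adjoin_ofReal h

end Complex

namespace Real

theorem sin_two_mul_pi_div_pos {n : ℕ} (hn : 3 ≤ n) : 0 < sin (2 * (π / n)) := by
  have hn' : (3 : ℝ) ≤ n := by exact_mod_cast hn
  apply sin_pos_of_pos_of_lt_pi (by positivity)
  rw [← mul_div_assoc, div_lt_iff₀ (by positivity)]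
  nlinarith [pi_pos]

theorem cos_pi_div_pos {n : ℕ} (hn : 3 ≤ n) : 0 < cos (π / n) := by
  have hn' : (3 : ℝ) ≤ n := by exact_mod_cast hn
  apply cos_pos_of_mem_Ioo ⟨by linarith [show 0 < π / n by positivity, pi_pos], ?_⟩
  exact div_lt_div_of_pos_left pi_pos (by norm_num) (by linarith)

end Real

/-- The invariant trace field `K n`: the subfield of `ℂ` generated over `ℚ`
by `i * cos (π / n)`. -/
noncomputable def pretzelTraceField (n : ℕ) : IntermediateField ℚ ℂ :=
  IntermediateField.adjoin ℚ {Complex.I * (Real.cos (Real.pi / n) : ℂ)}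

open Real in
theorem finrank_pretzelTraceField (n : ℕ) (hn : 3 ≤ n) :
    Module.finrank ℚ (pretzelTraceField n) = Nat.totient n := by
  have hζ : IsPrimitiveRoot (Complex.exp (↑(2 * (π / n)) * Complex.I)) n := by
    convert Complex.isPrimitiveRoot_exp n (by omega) using 2
    push_cast
    ring
  calc Module.finrank ℚ (pretzelTraceField n)
      = Module.finrank ℚ ℚ⟮Complex.exp (↑(2 * (π / n)) * Complex.I)⟯ :=
        finrank_eq_of_relfinrank_eq (Complex.adjoin_cos_two_mul_le_adjoin_I_mul_cos _)
          (Complex.adjoin_cos_le_adjoin_exp_mul_I _)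
          ((Complex.relfinrank_adjoin_cos_two_mul_adjoin_I_mul_cos
              (cos_pi_div_pos hn).ne').trans
            (Complex.relfinrank_adjoin_cos_adjoin_exp_mul_I (sin_two_mul_pi_div_pos hn).ne').symm)
    _ = n.totient := hζ.finrank_adjoin_rat (by omega)
end

section
/- For every natural number n ≥ 3, cos(2π/n) lies in the subfield of ℂ generated over ℚ by i·cos(π/n), and this field is a degree-2 extension of the subfield of ℂ generated over ℚ by cos(2π/n); that is, with F_n ⊆ K_n as subfields of ℂ, [K_n : F_n] = 2. -/
open IntermediateField Polynomial


/-- The totally real field `F n`: the subfield of `ℂ` generated over `ℚ`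
by `cos (2π / n)`. -/
noncomputable def pretzelRealField (n : ℕ) : IntermediateField ℚ ℂ :=
  IntermediateField.adjoin ℚ {((Real.cos (2 * Real.pi / n) : ℂ))}

theorem pretzelRealField_le_and_finrank_eq_two (n : ℕ) (hn : 3 ≤ n) :
    ((Real.cos (2 * Real.pi / n) : ℂ) ∈ pretzelTraceField n) ∧
    ∃ h : pretzelRealField n ≤ pretzelTraceField n,
      Module.finrank (pretzelRealField n) (IntermediateField.extendScalars h) = 2 := by
  set c : ℝ := Real.cos (Real.pi / n) with hc
  set α : ℂ := Complex.I * (c : ℂ) with hα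
  -- double angle
  have hcos : Real.cos (2 * Real.pi / n) = 2 * c ^ 2 - 1 := by
    rw [mul_div_assoc, Real.cos_two_mul]
  have hα2 : α ^ 2 = -(c : ℂ) ^ 2 := by
    rw [hα, mul_pow, Complex.I_sq]; ring
  have hkey : ((Real.cos (2 * Real.pi / n) : ℝ) : ℂ) = -(2 * α ^ 2) - 1 := by
    rw [hcos, hα2]; push_cast; ring
  have hαmem : α ∈ pretzelTraceField n := by
    exact IntermediateField.subset_adjoin ℚ _ rfl
  have h1 : ((Real.cos (2 * Real.pi / n) : ℝ) : ℂ) ∈ pretzelTraceField n := by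
    rw [hkey]
    exact sub_mem (neg_mem (mul_mem (ofNat_mem _ 2)
      (pow_mem hαmem 2))) (one_mem _)
  refine ⟨h1, ?_⟩
  have h : pretzelRealField n ≤ pretzelTraceField n := by
    rw [pretzelRealField, IntermediateField.adjoin_le_iff]
    rintro x hx
    rw [Set.mem_singleton_iff] at hx
    rw [hx]; exact h1
  refine ⟨h, ?_⟩
  set F := pretzelRealField n
  -- extendScalars h = adjoin F {α}
  have heq : IntermediateField.extendScalars h = IntermediateField.adjoin F {α} :=
    IntermediateField.extendScalars_adjoin h
  rw [heq]
  -- α² ∈ F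
  have hn0 : (0 : ℝ) < Real.pi / n := by
    apply div_pos Real.pi_pos; exact_mod_cast Nat.lt_of_lt_of_le (by norm_num) hn
  have hclt : Real.pi / n < Real.pi / 2 := by
    apply div_lt_div_of_pos_left Real.pi_pos (by norm_num)
    exact_mod_cast Nat.lt_of_lt_of_le (by norm_num) hn
  have hcpos : 0 < c := Real.cos_pos_of_mem_Ioo ⟨by linarith, hclt⟩
  -- F consists of real numbers
  have hFreal : ∀ x : ℂ, x ∈ F → x.im = 0 := by
    have hR : ∀ q : ℚ, (algebraMap ℚ ℂ) q ∈ Complex.ofRealHom.fieldRange := by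
      intro q; exact ⟨(q : ℝ), by norm_cast⟩
    set R : IntermediateField ℚ ℂ := Subfield.toIntermediateField Complex.ofRealHom.fieldRange hR
    have hFR : F ≤ R := by
      rw [show F = pretzelRealField n from rfl, pretzelRealField,
        IntermediateField.adjoin_le_iff]
      rintro x hx
      rw [Set.mem_singleton_iff] at hx
      exact hx ▸ ⟨Real.cos (2 * Real.pi / n), rfl⟩
    intro x hx
    obtain ⟨r, hr⟩ := hFR hx
    rw [← hr]; simp [Complex.ofRealHom]
  have ha2F : α ^ 2 ∈ F := by
    have : α ^ 2 = -(((Real.cos (2 * Real.pi / n) : ℝ) : ℂ) + 1) / 2 := by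
      rw [hα2, hcos]; push_cast; ring
    rw [this]
    exact div_mem (neg_mem (add_mem (IntermediateField.subset_adjoin ℚ _ rfl) (one_mem _)))
      (ofNat_mem _ 2)
  set a : F := ⟨α ^ 2, ha2F⟩ with ha
  set p : Polynomial F := X ^ 2 - C a with hp
  have hpmonic : p.Monic := by
    rw [hp]; exact (monic_X_pow 2).sub_of_left (by
      simpa using (degree_C_le).trans_lt (by norm_num))
  have hpeval : Polynomial.aeval α p = 0 := by
    rw [hp]; simp [ha]
  have hαint : IsIntegral F α := ⟨p, hpmonic, by rwa [← aeval_def]⟩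
  have hαnotF : α ∉ (algebraMap F ℂ).range := by
    rintro ⟨y, hy⟩
    have : α ∈ F := by rw [← hy]; exact y.2
    have him := hFreal α this
    rw [hα] at him
    simp at him
    exact absurd him (ne_of_gt hcpos)
  have hdeg : (minpoly F α).natDegree = 2 := by
    have hle : (minpoly F α).natDegree ≤ 2 := by
      have := minpoly.min F α hpmonic hpeval
      calc (minpoly F α).natDegree ≤ p.natDegree := natDegree_le_natDegree this
        _ = 2 := by rw [hp]; compute_degree!
    have hge : 2 ≤ (minpoly F α).natDegree := (minpoly.two_le_natDegree_iff hαint).2 hαnotF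
    omega
  rw [show IntermediateField.adjoin F {α} = F⟮α⟯ from rfl,
    IntermediateField.adjoin.finrank hαint, hdeg]
end

section
/- For every natural number d there exists a natural number N such that for all natural numbers n ≥ N, the degree over ℚ of the subfield of ℂ generated over ℚ by i·cos(π/n) is at least d. -/
open Filter Polynomial IntermediateField Module Real
open scoped Nat

namespace Nat

lemma le_totient_add_one_of_mem_primeFactors {n p : ℕ} (hp : p ∈ n.primeFactors) :
    p ≤ φ n + 1 := by
  obtain ⟨hprime, hdvd, hn⟩ := mem_primeFactors.1 hp
  have hle := Nat.le_of_dvd (totient_pos.2 (pos_of_ne_zero hn)) (totient_dvd_of_dvd hdvd)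
  rw [totient_prime hprime] at hle
  omega

lemma prod_primeFactors_le_primorial_totient_add_one (n : ℕ) :
    ∏ p ∈ n.primeFactors, p ≤ primorial (φ n + 1) := by
  rw [primorial_eq_prod_primesLE]
  refine Finset.prod_le_prod_of_subset_of_one_le' (fun p hp => ?_) fun _ hp _ => ?_
  · exact mem_primesLE.2 ⟨le_totient_add_one_of_mem_primeFactors hp, prime_of_mem_primeFactors hp⟩
  · exact (prime_of_mem_primesLE hp).one_le

lemma le_totient_mul_primorial (n : ℕ) : n ≤ φ n * primorial (φ n + 1) :=
  calc n ≤ n * ∏ p ∈ n.primeFactors, (p - 1) :=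
        Nat.le_mul_of_pos_right n <| Finset.prod_pos fun _ hp =>
          Nat.sub_pos_of_lt (prime_of_mem_primeFactors hp).one_lt
    _ = φ n * ∏ p ∈ n.primeFactors, p := (totient_mul_prod_primeFactors n).symm
    _ ≤ φ n * primorial (φ n + 1) :=
        Nat.mul_le_mul_left _ (prod_primeFactors_le_primorial_totient_add_one n)

theorem tendsto_totient_atTop : Tendsto φ atTop atTop := by
  refine tendsto_atTop_atTop.2 fun d => ⟨d * primorial (d + 1) + 1, fun n hn => ?_⟩
  by_contra! h
  have hle := (le_totient_mul_primorial n).trans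
    (Nat.mul_le_mul h.le (primorial_mono (Nat.add_le_add_right h.le 1)))
  omega

end Nat

lemma finrank_adjoin_simple_le_two_of_add_inv_eq {F L : Type*} [Field F] [Field L] [Algebra F L]
    {ζ : L} (hζ : ζ ≠ 0) {c : F} (hc : algebraMap F L c = ζ + ζ⁻¹) :
    finrank F F⟮ζ⟯ ≤ 2 := by
  set p : F[X] := X ^ 2 - C c * X + 1
  have hp : p.Monic := by unfold p; monicity!
  have hroot : aeval ζ p = 0 := by
    simp only [p, map_add, map_sub, map_mul, map_pow, aeval_X, aeval_C, map_one, hc]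
    field_simp
    ring
  rw [adjoin.finrank ⟨p, hp, hroot⟩]
  calc (minpoly F ζ).natDegree ≤ p.natDegree :=
        natDegree_le_of_dvd (minpoly.dvd F ζ hroot) hp.ne_zero
    _ = 2 := by unfold p; compute_degree!

namespace IsPrimitiveRoot

variable {L : Type*} [Field L] [CharZero L] {ζ : L} {n : ℕ}

lemma finrank_adjoin_rat_s2 (hζ : IsPrimitiveRoot ζ n) (hn : 0 < n) : finrank ℚ ℚ⟮ζ⟯ = φ n := by
  rw [adjoin.finrank (hζ.isIntegral hn).tower_top, ← cyclotomic_eq_minpoly_rat hζ hn,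
    natDegree_cyclotomic]

lemma totient_le_finrank_mul_finrank_adjoin (hζ : IsPrimitiveRoot ζ n) (hn : 0 < n)
    (F : IntermediateField ℚ L) [FiniteDimensional ℚ F] :
    φ n ≤ finrank ℚ F * finrank F F⟮ζ⟯ := by
  have : FiniteDimensional F F⟮ζ⟯ := adjoin.finiteDimensional (hζ.isIntegral hn).tower_top
  have : FiniteDimensional ℚ (F⟮ζ⟯.restrictScalars ℚ) := .trans ℚ F F⟮ζ⟯
  have hle : ℚ⟮ζ⟯ ≤ F⟮ζ⟯.restrictScalars ℚ := adjoin_simple_le_iff.2 (mem_adjoin_simple_self F ζ)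
  rw [← hζ.finrank_adjoin_rat_s2 hn]
  exact (finrank_le_of_le_right hle).trans_eq (finrank_mul_finrank ℚ F F⟮ζ⟯).symm

lemma totient_le_two_mul_finrank (hζ : IsPrimitiveRoot ζ n) (hn : 0 < n)
    (F : IntermediateField ℚ L) [FiniteDimensional ℚ F] (hF : ζ + ζ⁻¹ ∈ F) :
    φ n ≤ 2 * finrank ℚ F := by
  have hdeg : finrank F F⟮ζ⟯ ≤ 2 :=
    finrank_adjoin_simple_le_two_of_add_inv_eq (hζ.ne_zero hn.ne') (c := ⟨_, hF⟩) rfl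
  calc φ n ≤ finrank ℚ F * finrank F F⟮ζ⟯ := hζ.totient_le_finrank_mul_finrank_adjoin hn F
    _ ≤ 2 * finrank ℚ F := by rw [mul_comm]; exact Nat.mul_le_mul_right _ hdeg

end IsPrimitiveRoot

open Complex

lemma Complex.exp_two_pi_I_div_add_inv (n : ℕ) :
    exp (2 * π * I / n) + (exp (2 * π * I / n))⁻¹ =
      -4 * (I * (Real.cos (π / n) : ℂ)) ^ 2 - 2 := by
  have h : 2 * π * I / n = (2 * (π / n)) * I := by ring
  rw [← exp_neg, h, ← neg_mul, ← two_cos, cos_two_mul]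
  push_cast
  linear_combination (4 * cos (π / n) ^ 2) * I_sq

lemma isIntegral_I_mul_cos_pi_div (n : ℕ) : IsIntegral ℚ (I * (Real.cos (π / n) : ℂ)) := by
  have hcos : (Real.cos (π / n) : ℂ) = Complex.cos ((1 / n : ℚ) * π) := by push_cast; ring_nf
  rw [hcos]
  exact ((isIntegral_int_I.isAlgebraic.mul (isAlgebraic_cos_rat_mul_pi _)).extendScalars
    (RingHom.injective_int (algebraMap ℤ ℚ))).isIntegral

instance (n : ℕ) : FiniteDimensional ℚ (pretzelTraceField n) :=
  adjoin.finiteDimensional (isIntegral_I_mul_cos_pi_div n)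

lemma exp_two_pi_I_div_add_inv_mem_pretzelTraceField (n : ℕ) :
    exp (2 * π * I / n) + (exp (2 * π * I / n))⁻¹ ∈ pretzelTraceField n := by
  have hx := mem_adjoin_simple_self ℚ (I * (Real.cos (π / n) : ℂ))
  rw [exp_two_pi_I_div_add_inv]
  exact sub_mem (mul_mem (neg_mem (ofNat_mem _ 4)) (pow_mem hx 2)) (ofNat_mem _ 2)

theorem finrank_pretzelTraceField_unbounded (d : ℕ) :
    ∃ N : ℕ, ∀ n : ℕ, N ≤ n →
      d ≤ Module.finrank ℚ (pretzelTraceField n) := by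
  obtain ⟨N, hN⟩ := tendsto_atTop_atTop.1 Nat.tendsto_totient_atTop (2 * d)
  refine ⟨max N 1, fun n hn => ?_⟩
  have hn0 : 0 < n := by omega
  have h₁ := hN n (le_of_max_le_left hn)
  have h₂ := (isPrimitiveRoot_exp n hn0.ne').totient_le_two_mul_finrank hn0
    (pretzelTraceField n) (exp_two_pi_I_div_add_inv_mem_pretzelTraceField n)
  omega
end

section
/- For every natural number n ≥ 3 and every ring homomorphism σ from the subfield of ℂ generated over ℚ by i·cos(π/n) into ℂ, the image of σ is not contained in the real numbers; that is, there exists an element x of this field with σ(x) having nonzero imaginary part. -/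
theorem pretzelTraceField_no_real_places (n : ℕ) (hn : 3 ≤ n)
    (σ : pretzelTraceField n →+* ℂ) :
    ∃ x : pretzelTraceField n, (σ x).im ≠ 0 := by
  have hn0 : (n : ℝ) ≠ 0 := by positivity
  have hnn : (n : ℂ) ≠ 0 := Nat.cast_ne_zero.mpr (by omega)
  set c : ℝ := Real.cos (Real.pi / n) with hc
  have hmem : (Complex.I * (c : ℂ)) ∈ pretzelTraceField n :=
    IntermediateField.subset_adjoin ℚ _ rfl
  set a : pretzelTraceField n := ⟨Complex.I * (c : ℂ), hmem⟩ with ha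
  refine ⟨a, ?_⟩
  set z : ℂ := σ a with hz
  -- the auxiliary element g = -2a² - 1, equal to cos(2π/n) in ℂ
  set g : pretzelTraceField n := -(2 * a ^ 2) - 1 with hg
  have hgval : (g : ℂ) = ((Real.cos (2 * (Real.pi / n)) : ℝ) : ℂ) := by
    have h1 : ((g : ℂ)) = -(2 * (Complex.I * (c : ℂ)) ^ 2) - 1 := by
      push_cast [hg, ha]
      norm_num
      exact Or.inl rfl
    rw [h1, Real.cos_two_mul, ← hc]
    push_cast
    rw [mul_pow, Complex.I_sq]
    ring
  -- g is a root of the rational Chebyshev polynomial T n - 1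
  set q : Polynomial ℚ := Polynomial.Chebyshev.T ℚ (n : ℤ) - 1 with hq
  have haeval : Polynomial.aeval g q = 0 := by
    have hinj : Function.Injective (algebraMap (pretzelTraceField n) ℂ) :=
      (algebraMap (pretzelTraceField n) ℂ).injective
    have hC : Polynomial.aeval ((g : ℂ)) q = 0 := by
      rw [hgval, hq, map_sub, Polynomial.aeval_one,
        Polynomial.Chebyshev.aeval_T]
      rw [Complex.ofReal_cos, Polynomial.Chebyshev.T_complex_cos]
      have h2 : ((n : ℤ) : ℂ) * ((2 * (Real.pi / n) : ℝ) : ℂ)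
          = ((2 * Real.pi : ℝ) : ℂ) := by
        push_cast
        field_simp
      rw [h2, ← Complex.ofReal_cos, Real.cos_two_pi, Complex.ofReal_one,
        sub_self]
    have h4 := Polynomial.aeval_algHom_apply
      (IsScalarTower.toAlgHom ℚ (pretzelTraceField n) ℂ) g q
    have h3 : (IsScalarTower.toAlgHom ℚ (pretzelTraceField n) ℂ) g = (g : ℂ) := rfl
    rw [h3, hC] at h4
    apply hinj
    rw [map_zero]
    exact h4.symm
  -- transport along σ : the image w = σ g is also a root of T n - 1
  have haevalσ : Polynomial.aeval (σ g) q = 0 := by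
    have h := Polynomial.aeval_algHom_apply σ.toRatAlgHom g q
    rw [haeval, map_zero] at h
    exact h
  set w : ℂ := σ g with hw
  have hTw : (Polynomial.Chebyshev.T ℂ (n : ℤ)).eval w = 1 := by
    have h := haevalσ
    rw [hq, map_sub, Polynomial.aeval_one, Polynomial.Chebyshev.aeval_T,
      sub_eq_zero] at h
    exact h
  -- hence w = cos θ with cos (n θ) = 1, so θ is real and w is a real cosine
  obtain ⟨θ, hθ⟩ := Complex.cos_surjective w
  rw [← hθ, Polynomial.Chebyshev.T_complex_cos] at hTw
  obtain ⟨k, hk⟩ := Complex.cos_eq_one_iff.mp hTw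
  have hθ' : θ = (k : ℂ) * (2 * (Real.pi : ℂ)) / n := by
    rw [eq_div_iff hnn]
    push_cast at hk
    linear_combination -hk
  have hθreal : θ = (((k * (2 * Real.pi) / n : ℝ)) : ℂ) := by
    rw [hθ']; push_cast; ring
  have hwreal : w = ((Real.cos (k * (2 * Real.pi) / n) : ℝ) : ℂ) := by
    rw [← hθ, hθreal, Complex.ofReal_cos]
  -- compute w in terms of z
  have hwz : w = -(2 * z ^ 2) - 1 := by
    simp only [hw, hg, hz, map_sub, map_neg, map_mul, map_pow, map_one,
      map_ofNat]
  -- conclude: if σ a were real, then z² ≥ 0 while z² = -(cos+1)/2 ≤ 0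
  intro him
  have hzre : z = (z.re : ℂ) := Complex.ext (by simp) (by simpa using him)
  have hre : -(2 * (z.re : ℝ) ^ 2) - 1 = Real.cos (k * (2 * Real.pi) / n) := by
    have h := hwz.symm.trans hwreal
    rw [hzre] at h
    exact_mod_cast h
  have hcosge : -1 ≤ Real.cos (k * (2 * Real.pi) / n) := Real.neg_one_le_cos _
  have hz0 : z.re = 0 := by nlinarith [sq_nonneg z.re]
  have hzzero : z = 0 := by rw [hzre, hz0]; simp
  have ha0 : a = 0 := σ.injective (by rw [← hz, hzzero, map_zero])
  have hIc : Complex.I * (c : ℂ) = 0 := by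
    have h := congrArg (Subtype.val) ha0
    simpa [ha] using h
  have hc0 : c = 0 := by
    rcases mul_eq_zero.mp hIc with h | h
    · exact absurd h Complex.I_ne_zero
    · exact_mod_cast h
  have hcpos : 0 < c := by
    rw [hc]
    apply Real.cos_pos_of_mem_Ioo
    constructor
    · have h3 : 0 < Real.pi / n := by positivity
      linarith [Real.pi_pos]
    · calc Real.pi / n ≤ Real.pi / 3 := by
            apply div_le_div_of_nonneg_left Real.pi_pos.le (by norm_num)
            exact_mod_cast hn
        _ < Real.pi / 2 := by
            apply div_lt_div_of_pos_left Real.pi_pos <;> norm_num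
  linarith
end

section
/- For every natural number n ≥ 3, the degree over ℚ of the subfield of ℂ generated over ℚ by i·cos(π/n) equals 2 if and only if n ∈ {3, 4, 6}. -/
/-!
The generator `z = i cos(π/n)` is purely imaginary and nonzero, so `ℚ(z)` is quadratic
exactly when `z² = -cos²(π/n)` is rational: the real part of a relation `z² + a z + b = 0`
over `ℚ` reads `cos²(π/n) = b`. As `cos² x = (1 + cos 2x) / 2`, this says `cos(2π/n) ∈ ℚ`,
and Niven's theorem leaves only the angles `π/3, π/2, 2π/3, π` in `(0, π]`.
-/

open Module Polynomial IntermediateField Real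

section QuadraticGenerator

variable {K L : Type*} [Field K] [Field L] [Algebra K L]

theorem finrank_adjoin_simple_eq_two_of_sq_eq_algebraMap {x : L} {a : K}
    (hx : x ∉ (algebraMap K L).range) (hsq : x ^ 2 = algebraMap K L a) :
    finrank K K⟮x⟯ = 2 := by
  have hmonic : (X ^ 2 - C a).Monic := monic_X_pow_sub_C a two_ne_zero
  have hroot : aeval x (X ^ 2 - C a) = 0 := by simp [hsq]
  have hint : IsIntegral K x := ⟨_, hmonic, hroot⟩
  rw [adjoin.finrank hint]
  refine le_antisymm ?_ ((minpoly.two_le_natDegree_iff hint).mpr hx)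
  calc (minpoly K x).natDegree ≤ (X ^ 2 - C a).natDegree :=
        natDegree_le_natDegree (minpoly.degree_le_of_ne_zero K x hmonic.ne_zero hroot)
    _ = 2 := natDegree_X_pow_sub_C

theorem exists_quadratic_eq_zero_of_finrank_adjoin_simple_eq_two {x : L}
    (h : finrank K K⟮x⟯ = 2) :
    ∃ a b : K, x ^ 2 + algebraMap K L a * x + algebraMap K L b = 0 := by
  have : FiniteDimensional K K⟮x⟯ := .of_finrank_pos (by omega)
  have hint : IsIntegral K x := isIntegral_iff.mp (.of_finite K (AdjoinSimple.gen K x))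
  have hdeg : (minpoly K x).natDegree = 2 := by rw [← adjoin.finrank hint, h]
  have hquad := eq_quadratic_of_degree_le_two (degree_le_of_natDegree_le hdeg.le)
  rw [← hdeg, (minpoly.monic hint).coeff_natDegree, hdeg] at hquad
  refine ⟨(minpoly K x).coeff 1, (minpoly K x).coeff 0, ?_⟩
  have hroot := minpoly.aeval K x
  rw [hquad] at hroot
  simpa [Algebra.smul_def] using hroot

end QuadraticGenerator

theorem finrank_adjoin_I_mul_ofReal_eq_two_iff {c : ℝ} (hc : c ≠ 0) :
    finrank ℚ ℚ⟮Complex.I * c⟯ = 2 ↔ ∃ q : ℚ, c ^ 2 = q := by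
  constructor
  · intro h
    obtain ⟨a, b, hab⟩ := exists_quadratic_eq_zero_of_finrank_adjoin_simple_eq_two h
    exact ⟨b, by simpa [sq, neg_add_eq_zero] using congrArg Complex.re hab⟩
  · rintro ⟨q, hq⟩
    refine finrank_adjoin_simple_eq_two_of_sq_eq_algebraMap (a := -q) ?_ ?_
    · rintro ⟨r, hr⟩
      exact hc (by simpa using (congrArg Complex.im hr).symm)
    · simp [mul_pow, ← Complex.ofReal_pow, hq]

theorem exists_rat_cos_sq_iff (x : ℝ) :
    (∃ q : ℚ, cos x ^ 2 = q) ↔ ∃ q : ℚ, cos (2 * x) = q := by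
  rw [cos_sq x]
  constructor
  · rintro ⟨q, hq⟩
    exact ⟨2 * q - 1, by push_cast; linarith⟩
  · rintro ⟨q, hq⟩
    exact ⟨1 / 2 + q / 2, by push_cast; linarith⟩

theorem exists_rat_cos_two_pi_div_iff {n : ℕ} (hn : 2 ≤ n) :
    (∃ q : ℚ, cos (2 * π / n) = q) ↔ n = 2 ∨ n = 3 ∨ n = 4 ∨ n = 6 := by
  constructor
  · intro h
    have hn' : (2 : ℚ) ≤ n := by exact_mod_cast hn
    have hmem := niven_angle_div_pi_eq (r := 2 / n) (by push_cast; rwa [div_mul_eq_mul_div])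
      ⟨by positivity, by rw [div_le_one (by positivity)]; exact hn'⟩
    simp only [Set.mem_insert_iff, Set.mem_singleton_iff] at hmem
    rcases hmem with h | h | h | h | h <;> field_simp at h <;> norm_cast at h <;> omega
  · rintro (rfl | rfl | rfl | rfl)
    · exact ⟨-1, by norm_num⟩
    · refine ⟨-1 / 2, ?_⟩
      rw [show 2 * π / ((3 : ℕ) : ℝ) = π - π / 3 by push_cast; ring, cos_pi_sub,
        cos_pi_div_three]
      norm_num
    · refine ⟨0, ?_⟩
      rw [show 2 * π / ((4 : ℕ) : ℝ) = π / 2 by push_cast; ring, cos_pi_div_two]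
      simp
    · refine ⟨1 / 2, ?_⟩
      rw [show 2 * π / ((6 : ℕ) : ℝ) = π / 3 by push_cast; ring, cos_pi_div_three]
      simp

theorem finrank_pretzelTraceField_eq_two_iff (n : ℕ) (hn : 3 ≤ n) :
    Module.finrank ℚ (pretzelTraceField n) = 2 ↔ n = 3 ∨ n = 4 ∨ n = 6 := by
  have hπn : π / n < π / 2 :=
    div_lt_div_of_pos_left pi_pos two_pos (by exact_mod_cast (by omega : 2 < n))
  have hcos : cos (π / n) ≠ 0 :=
    (cos_pos_of_mem_Ioo ⟨by linarith [div_nonneg pi_pos.le n.cast_nonneg], hπn⟩).ne'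
  rw [pretzelTraceField, finrank_adjoin_I_mul_ofReal_eq_two_iff hcos, exists_rat_cos_sq_iff,
    ← mul_div_assoc, exists_rat_cos_two_pi_div_iff (by omega)]
  omega
end
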